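/- Let W = (X, Y, Z, q_{Z|X,Y}) be a channel with finite alphabets and q_X, q_Y input distributions, and let (X^n, Y^n, Z^n) be distributed according to the n-fold product q_{X,Y,Z}^n. Then for every ε > 0 and every α > 1, P( (X^n, Y^n, Z^n) ∉ T1^n(ε) ) ≤ exp( n(α−1) ( D_α( q_{X,Y,Z} ‖ q_{X|Y} q_{Z|Y} q_Y ) − I(X;Z|Y) − ε ) ). In particular, if β > 0 satisfies β < (α−1)( I(X;Z|Y) + ε − D_α( q_{X,Y,Z} ‖ q_{X|Y} q_{Z|Y} q_Y ) ) for some α > 1, then P( (X^n, Y^n, Z^n) ∉ T1^n(ε) ) ≤ exp(−nβ). -/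
import Mathlib


open scoped BigOperators Classical

noncomputable section

namespace MACResolvability

/-- A multiple-access channel with finite input alphabets `X`, `Y`, finite output
alphabet `Z`, channel transition probabilities `W` and input distributions `qX`, `qY`. -/
structure Channel (X Y Z : Type) [Fintype X] [Fintype Y] [Fintype Z] where
  W : X → Y → Z → ℝ
  qX : X → ℝ
  qY : Y → ℝ
  W_nonneg : ∀ x y z, 0 ≤ W x y z
  W_sum_one : ∀ x y, ∑ z, W x y z = 1
  qX_nonneg : ∀ x, 0 ≤ qX x
  qX_sum_one : ∑ x, qX x = 1
  qY_nonneg : ∀ y, 0 ≤ qY y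
  qY_sum_one : ∑ y, qY y = 1

/-- Number of codewords of a codebook of block length `n` and rate `R` : `exp (n R)`. -/
def numCw (n : ℕ) (R : ℝ) : ℕ := ⌈Real.exp ((n : ℝ) * R)⌉₊

/-- Variational distance between two (mass) functions on a finite set. -/
def tvDist {α : Type} [Fintype α] (p q : α → ℝ) : ℝ := (1 / 2) * ∑ a, |p a - q a|

/-- The standard normal cumulative distribution function `Φ`. -/
def stdNormalCDF (a : ℝ) : ℝ :=
  ∫ x in Set.Iic a, Real.exp (-(x ^ 2) / 2) / Real.sqrt (2 * Real.pi)

/-- The Gaussian tail function `Q = 1 - Φ`. -/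
def Qfun (a : ℝ) : ℝ := 1 - stdNormalCDF a

/-- The inverse of the Gaussian tail function `Q` on `(0,1)`. -/
def Qinv (e : ℝ) : ℝ := Function.invFun Qfun e

variable {X Y Z : Type} [Fintype X] [Fintype Y] [Fintype Z]

namespace Channel

variable (P : Channel X Y Z)

/-- Induced joint distribution `q_{X,Y,Z}`. -/
def joint (x : X) (y : Y) (z : Z) : ℝ := P.qX x * P.qY y * P.W x y z

/-- Output distribution `q_Z`. -/
def qZ (z : Z) : ℝ := ∑ x, ∑ y, P.joint x y z

/-- Conditional output distribution `q_{Z|Y}`. -/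
def qZgY (y : Y) (z : Z) : ℝ := ∑ x, P.qX x * P.W x y z

/-- Conditional output distribution `q_{Z|X}`. -/
def qZgX (x : X) (z : Z) : ℝ := ∑ y, P.qY y * P.W x y z

/-- Conditional information density `i(x; z | y)`. -/
def iXZgY (x : X) (y : Y) (z : Z) : ℝ := Real.log (P.W x y z / P.qZgY y z)

/-- Information density `i(y; z)`. -/
def iYZ (y : Y) (z : Z) : ℝ := Real.log (P.qZgY y z / P.qZ z)

/-- Information density `i(x; z)`. -/
def iXZ (x : X) (z : Z) : ℝ := Real.log (P.qZgX x z / P.qZ z)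

/-- Conditional information density `i(y; z | x)`. -/
def iYZgX (x : X) (y : Y) (z : Z) : ℝ := Real.log (P.W x y z / P.qZgX x z)

/-- Conditional mutual information `I(X; Z | Y)`. -/
def IXZgY : ℝ := ∑ x, ∑ y, ∑ z, P.joint x y z * P.iXZgY x y z

/-- Mutual information `I(Y; Z)`. -/
def IYZ : ℝ := ∑ x, ∑ y, ∑ z, P.joint x y z * P.iYZ y z

/-- Mutual information `I(X; Z)`. -/
def IXZ : ℝ := ∑ x, ∑ y, ∑ z, P.joint x y z * P.iXZ x z

/-- Conditional mutual information `I(Y; Z | X)`. -/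
def IYZgX : ℝ := ∑ x, ∑ y, ∑ z, P.joint x y z * P.iYZgX x y z

/-- Central second moment of a per-letter function of `(X,Y,Z)` under the joint. -/
def centralMoment2 (f : X → Y → Z → ℝ) : ℝ :=
  ∑ x, ∑ y, ∑ z, P.joint x y z *
    (f x y z - ∑ x', ∑ y', ∑ z', P.joint x' y' z' * f x' y' z') ^ 2

/-- Central absolute third moment of a per-letter function of `(X,Y,Z)` under the joint. -/
def absMoment3 (f : X → Y → Z → ℝ) : ℝ :=
  ∑ x, ∑ y, ∑ z, P.joint x y z *
    |f x y z - ∑ x', ∑ y', ∑ z', P.joint x' y' z' * f x' y' z'| ^ 3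

/-- Central second moment of `i(X;Z|Y)`. -/
def V1 : ℝ := P.centralMoment2 P.iXZgY
/-- Central absolute third moment of `i(X;Z|Y)`. -/
def Tm1 : ℝ := P.absMoment3 P.iXZgY
/-- Central second moment of `i(Y;Z)`. -/
def V2 : ℝ := P.centralMoment2 fun _ y z => P.iYZ y z
/-- Central absolute third moment of `i(Y;Z)`. -/
def Tm2 : ℝ := P.absMoment3 fun _ y z => P.iYZ y z
/-- Central second moment of `i(X;Z)`. -/
def VX : ℝ := P.centralMoment2 fun x _ z => P.iXZ x z
/-- Central absolute third moment of `i(X;Z)`. -/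
def TmX : ℝ := P.absMoment3 fun x _ z => P.iXZ x z
/-- Central second moment of `i(Y;Z|X)`. -/
def VYgX : ℝ := P.centralMoment2 P.iYZgX
/-- Central absolute third moment of `i(Y;Z|X)`. -/
def TmYgX : ℝ := P.absMoment3 P.iYZgX

/-- `n`-fold product channel `q_{Z^n | X^n, Y^n}`. -/
def Wn (n : ℕ) (xs : Fin n → X) (ys : Fin n → Y) (zs : Fin n → Z) : ℝ :=
  ∏ k, P.W (xs k) (ys k) (zs k)

/-- `n`-fold product output distribution `q_{Z^n}`. -/
def qZn (n : ℕ) (zs : Fin n → Z) : ℝ := ∏ k, P.qZ (zs k)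

/-- `n`-fold product conditional distribution `q_{Z^n | Y^n}`. -/
def qZgYn (n : ℕ) (ys : Fin n → Y) (zs : Fin n → Z) : ℝ := ∏ k, P.qZgY (ys k) (zs k)

/-- `n`-letter conditional information density `i(x^n; z^n | y^n)`. -/
def iXZgYn (n : ℕ) (xs : Fin n → X) (ys : Fin n → Y) (zs : Fin n → Z) : ℝ :=
  ∑ k, P.iXZgY (xs k) (ys k) (zs k)

/-- `n`-letter information density `i(y^n; z^n)`. -/
def iYZn (n : ℕ) (ys : Fin n → Y) (zs : Fin n → Z) : ℝ := ∑ k, P.iYZ (ys k) (zs k)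

/-- The typical set `T1^n(ε)`. -/
def T1set (n : ℕ) (ε : ℝ) : Set ((Fin n → X) × (Fin n → Y) × (Fin n → Z)) :=
  {t | P.iXZgYn n t.1 t.2.1 t.2.2 ≤ (n : ℝ) * (P.IXZgY + ε)}

/-- The typical set `T2^n(ε)`. -/
def T2set (n : ℕ) (ε : ℝ) : Set ((Fin n → Y) × (Fin n → Z)) :=
  {t | P.iYZn n t.1 t.2 ≤ (n : ℝ) * (P.IYZ + ε)}

/-- Probability of an event under the `n`-fold i.i.d. joint distribution `q_{X,Y,Z}^n`. -/
def jointPn (n : ℕ) (A : Set ((Fin n → X) × (Fin n → Y) × (Fin n → Z))) : ℝ :=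
  ∑ xs : Fin n → X, ∑ ys : Fin n → Y, ∑ zs : Fin n → Z,
    (∏ k, P.joint (xs k) (ys k) (zs k)) * (if (xs, ys, zs) ∈ A then 1 else 0)

/-- Probability of an event of `(Y^n, Z^n)` under the `n`-fold i.i.d. joint distribution. -/
def jointPYZn (n : ℕ) (A : Set ((Fin n → Y) × (Fin n → Z))) : ℝ :=
  ∑ xs : Fin n → X, ∑ ys : Fin n → Y, ∑ zs : Fin n → Z,
    (∏ k, P.joint (xs k) (ys k) (zs k)) * (if (ys, zs) ∈ A then 1 else 0)

/-- Probability of an event of the pair of random codebooks, each component of each codeword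
drawn i.i.d. according to `qX` resp. `qY`. -/
def cbP2 (n M1 M2 : ℕ)
    (E : (Fin M1 → Fin n → X) → (Fin M2 → Fin n → Y) → Prop) : ℝ :=
  ∑ C1 : Fin M1 → Fin n → X, ∑ C2 : Fin M2 → Fin n → Y,
    ((∏ m, ∏ k, P.qX (C1 m k)) * (∏ m, ∏ k, P.qY (C2 m k))) *
      (if E C1 C2 then 1 else 0)

/-- Probability of an event of the random codebook `C1`. -/
def cbP1 (n M1 : ℕ) (E : (Fin M1 → Fin n → X) → Prop) : ℝ :=
  ∑ C1 : Fin M1 → Fin n → X,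
    (∏ m, ∏ k, P.qX (C1 m k)) * (if E C1 then 1 else 0)

/-- Expectation of a function of the pair of random codebooks. -/
def cbE2 (n M1 M2 : ℕ)
    (f : (Fin M1 → Fin n → X) → (Fin M2 → Fin n → Y) → ℝ) : ℝ :=
  ∑ C1 : Fin M1 → Fin n → X, ∑ C2 : Fin M2 → Fin n → Y,
    ((∏ m, ∏ k, P.qX (C1 m k)) * (∏ m, ∏ k, P.qY (C2 m k))) * f C1 C2

/-- The output distribution `p_{Z^n | C1, C2}` induced by the codebooks `C1`, `C2`. -/
def pOut (n : ℕ) (R1 R2 : ℝ) {M1 M2 : ℕ}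
    (C1 : Fin M1 → Fin n → X) (C2 : Fin M2 → Fin n → Y) (zs : Fin n → Z) : ℝ :=
  Real.exp (-((n : ℝ) * (R1 + R2))) * ∑ m1, ∑ m2, P.Wn n (C1 m1) (C2 m2) zs

/-- The atypical term `P_atyp,1` for a typical set `T1`. -/
def Patyp1 (n : ℕ) (R1 R2 : ℝ) {M1 M2 : ℕ}
    (C1 : Fin M1 → Fin n → X) (C2 : Fin M2 → Fin n → Y)
    (T1 : Set ((Fin n → X) × (Fin n → Y) × (Fin n → Z))) : ℝ :=
  ∑ zs : Fin n → Z, Real.exp (-((n : ℝ) * (R1 + R2))) *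
    ∑ m1, ∑ m2, P.Wn n (C1 m1) (C2 m2) zs *
      (if (C1 m1, C2 m2, zs) ∈ T1 then 0 else 1)

/-- The atypical term `P_atyp,2` for a typical set `T2`. -/
def Patyp2 (n : ℕ) (R1 R2 : ℝ) {M1 M2 : ℕ}
    (C1 : Fin M1 → Fin n → X) (C2 : Fin M2 → Fin n → Y)
    (T2 : Set ((Fin n → Y) × (Fin n → Z))) : ℝ :=
  ∑ zs : Fin n → Z, Real.exp (-((n : ℝ) * (R1 + R2))) *
    ∑ m1, ∑ m2, P.Wn n (C1 m1) (C2 m2) zs *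
      (if (C2 m2, zs) ∈ T2 then 0 else 1)

/-- The typical term `T_typ(z^n)`. -/
def Ttyp (n : ℕ) (R1 R2 : ℝ) {M1 M2 : ℕ}
    (C1 : Fin M1 → Fin n → X) (C2 : Fin M2 → Fin n → Y)
    (T1 : Set ((Fin n → X) × (Fin n → Y) × (Fin n → Z)))
    (T2 : Set ((Fin n → Y) × (Fin n → Z))) (zs : Fin n → Z) : ℝ :=
  ∑ m1, ∑ m2, Real.exp (-((n : ℝ) * (R1 + R2))) *
    (P.Wn n (C1 m1) (C2 m2) zs / P.qZn n zs) *
    (if (C2 m2, zs) ∈ T2 then 1 else 0) *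
    (if (C1 m1, C2 m2, zs) ∈ T1 then 1 else 0)

/-- The typical term `T_typ,1(y^n, z^n)` of the first codebook. -/
def Ttyp1 (n : ℕ) (R1 : ℝ) {M1 : ℕ} (C1 : Fin M1 → Fin n → X)
    (ys : Fin n → Y) (zs : Fin n → Z)
    (T1 : Set ((Fin n → X) × (Fin n → Y) × (Fin n → Z))) : ℝ :=
  ∑ m1, Real.exp (-((n : ℝ) * R1)) *
    (P.Wn n (C1 m1) ys zs / P.qZgYn n ys zs) *
    (if (C1 m1, ys, zs) ∈ T1 then 1 else 0)

end Channel

/-- Conditional marginal `q_{X|Y}`. -/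
def Channel.qXgY {X Y Z : Type} [Fintype X] [Fintype Y] [Fintype Z]
    (P : Channel X Y Z) (x : X) (y : Y) : ℝ := (P.qX x * P.qY y) / P.qY y

/-- The Rényi divergence of order `α` of `q_{X,Y,Z}` from `q_{X|Y} q_{Z|Y} q_Y`. -/
def Channel.renyi1 {X Y Z : Type} [Fintype X] [Fintype Y] [Fintype Z]
    (P : Channel X Y Z) (α : ℝ) : ℝ :=
  (1 / (α - 1)) * Real.log (∑ x, ∑ y, ∑ z,
    (P.joint x y z) ^ α * (P.qXgY x y * P.qZgY y z * P.qY y) ^ (1 - α))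


namespace Statement7Aux

lemma joint_nonneg {X Y Z : Type} [Fintype X] [Fintype Y] [Fintype Z]
    (P : Channel X Y Z) (x : X) (y : Y) (z : Z) : 0 ≤ P.joint x y z :=
  mul_nonneg (mul_nonneg (P.qX_nonneg x) (P.qY_nonneg y)) (P.W_nonneg x y z)

lemma sum_prod_comp {A : Type} [Fintype A] (n : ℕ) (F : Fin n → A → ℝ) :
    ∑ f : Fin n → A, ∏ k, F k (f k) = ∏ k, ∑ a, F k a := by
  rw [Finset.prod_univ_sum, Fintype.piFinset_univ]

set_option maxHeartbeats 1000000 in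
lemma triple_sum_prod {X Y Z : Type} [Fintype X] [Fintype Y] [Fintype Z]
    (g : X → Y → Z → ℝ) (n : ℕ) :
    ∑ xs : Fin n → X, ∑ ys : Fin n → Y, ∑ zs : Fin n → Z,
      ∏ k, g (xs k) (ys k) (zs k) = (∑ x, ∑ y, ∑ z, g x y z) ^ n := by
  calc ∑ xs : Fin n → X, ∑ ys : Fin n → Y, ∑ zs : Fin n → Z,
        ∏ k, g (xs k) (ys k) (zs k)
      = ∑ xs : Fin n → X, ∑ ys : Fin n → Y, ∏ k, ∑ z, g (xs k) (ys k) z := by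
        refine Finset.sum_congr rfl fun xs _ => Finset.sum_congr rfl fun ys _ => ?_
        exact sum_prod_comp n (fun k z => g (xs k) (ys k) z)
    _ = ∑ xs : Fin n → X, ∏ k, ∑ y, ∑ z, g (xs k) y z := by
        refine Finset.sum_congr rfl fun xs _ => ?_
        exact sum_prod_comp n (fun k y => ∑ z, g (xs k) y z)
    _ = ∏ _k : Fin n, ∑ x, ∑ y, ∑ z, g x y z :=
        sum_prod_comp n (fun _k x => ∑ y, ∑ z, g x y z)
    _ = (∑ x, ∑ y, ∑ z, g x y z) ^ n := by simp

lemma term_eq {X Y Z : Type} [Fintype X] [Fintype Y] [Fintype Z]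
    (P : Channel X Y Z) {α : ℝ} (hα : 1 < α) (x : X) (y : Y) (z : Z) :
    P.joint x y z * Real.exp ((α - 1) * P.iXZgY x y z)
      = (P.joint x y z) ^ α * (P.qXgY x y * P.qZgY y z * P.qY y) ^ (1 - α) := by
  have hαne : α ≠ 0 := by linarith
  by_cases hx : P.qX x = 0
  · simp [Channel.joint, hx, Real.zero_rpow hαne]
  by_cases hy : P.qY y = 0
  · simp [Channel.joint, hy, Real.zero_rpow hαne]
  by_cases hw : P.W x y z = 0
  · simp [Channel.joint, hw, Real.zero_rpow hαne]
  have hx' : 0 < P.qX x := (P.qX_nonneg x).lt_of_ne (Ne.symm hx)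
  have hy' : 0 < P.qY y := (P.qY_nonneg y).lt_of_ne (Ne.symm hy)
  have hw' : 0 < P.W x y z := (P.W_nonneg x y z).lt_of_ne (Ne.symm hw)
  have hq : 0 < P.qZgY y z := by
    refine lt_of_lt_of_le (mul_pos hx' hw') ?_
    exact Finset.single_le_sum (fun i _ => mul_nonneg (P.qX_nonneg i) (P.W_nonneg i y z))
      (Finset.mem_univ x)
  have hqXgY : P.qXgY x y = P.qX x := by
    unfold Channel.qXgY; field_simp
  have hL : P.joint x y z * Real.exp ((α - 1) * P.iXZgY x y z)
      = Real.exp (Real.log (P.qX x) + Real.log (P.qY y) + Real.log (P.W x y z)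
          + (α - 1) * (Real.log (P.W x y z) - Real.log (P.qZgY y z))) := by
    rw [Channel.iXZgY, Real.log_div hw'.ne' hq.ne', Channel.joint,
      ← Real.exp_log (mul_pos (mul_pos hx' hy') hw'),
      Real.log_mul (mul_pos hx' hy').ne' hw'.ne', Real.log_mul hx'.ne' hy'.ne',
      ← Real.exp_add]
  have hR : (P.joint x y z) ^ α * (P.qXgY x y * P.qZgY y z * P.qY y) ^ (1 - α)
      = Real.exp (α * (Real.log (P.qX x) + Real.log (P.qY y) + Real.log (P.W x y z))
          + (1 - α) * (Real.log (P.qX x) + Real.log (P.qZgY y z) + Real.log (P.qY y))) := by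
    rw [Channel.joint, hqXgY,
      Real.rpow_def_of_pos (mul_pos (mul_pos hx' hy') hw'),
      Real.rpow_def_of_pos (mul_pos (mul_pos hx' hq) hy'),
      ← Real.exp_add,
      Real.log_mul (mul_pos hx' hy').ne' hw'.ne', Real.log_mul hx'.ne' hy'.ne',
      Real.log_mul (mul_pos hx' hq).ne' hy'.ne', Real.log_mul hx'.ne' hq.ne']
    exact congrArg Real.exp (by ring)
  rw [hL, hR]
  exact congrArg Real.exp (by ring)

end Statement7Aux

/-- Chernoff bound on the first atypical probability, (13)-(16): the
probability of falling outside `T1^n(ε)` is bounded via the Rényi divergence, and hence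
exponentially small for suitable `β`. -/
theorem statement7 {X Y Z : Type} [Fintype X] [Fintype Y] [Fintype Z]
    (P : Channel X Y Z) (n : ℕ) (ε α : ℝ) (hε : 0 < ε) (hα : 1 < α) :
    P.jointPn n ((P.T1set n ε)ᶜ)
        ≤ Real.exp ((n : ℝ) * (α - 1) * (P.renyi1 α - P.IXZgY - ε)) ∧
      ∀ β : ℝ, 0 < β → β < (α - 1) * (P.IXZgY + ε - P.renyi1 α) →
        P.jointPn n ((P.T1set n ε)ᶜ) ≤ Real.exp (-((n : ℝ) * β)) := by
  have hα1 : (0:ℝ) < α - 1 := by linarith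
  set S : ℝ := ∑ x, ∑ y, ∑ z, P.joint x y z * Real.exp ((α - 1) * P.iXZgY x y z) with hS
  -- positivity of S
  obtain ⟨x0, hx0⟩ : ∃ x, 0 < P.qX x := by
    by_contra h; push_neg at h
    have h0 : ∑ x, P.qX x = 0 :=
      Finset.sum_eq_zero fun i _ => le_antisymm (h i) (P.qX_nonneg i)
    rw [P.qX_sum_one] at h0; norm_num at h0
  obtain ⟨y0, hy0⟩ : ∃ y, 0 < P.qY y := by
    by_contra h; push_neg at h
    have h0 : ∑ y, P.qY y = 0 :=
      Finset.sum_eq_zero fun i _ => le_antisymm (h i) (P.qY_nonneg i)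
    rw [P.qY_sum_one] at h0; norm_num at h0
  obtain ⟨z0, hz0⟩ : ∃ z, 0 < P.W x0 y0 z := by
    by_contra h; push_neg at h
    have h0 : ∑ z, P.W x0 y0 z = 0 :=
      Finset.sum_eq_zero fun i _ => le_antisymm (h i) (P.W_nonneg x0 y0 i)
    rw [P.W_sum_one] at h0; norm_num at h0
  have hterm : ∀ x y z, 0 ≤ P.joint x y z * Real.exp ((α - 1) * P.iXZgY x y z) :=
    fun x y z => mul_nonneg (Statement7Aux.joint_nonneg P x y z) (Real.exp_pos _).le
  have hSpos : 0 < S := by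
    rw [hS]
    refine Finset.sum_pos'
      (fun x _ => Finset.sum_nonneg fun y _ => Finset.sum_nonneg fun z _ => hterm x y z)
      ⟨x0, Finset.mem_univ x0, ?_⟩
    refine Finset.sum_pos'
      (fun y _ => Finset.sum_nonneg fun z _ => hterm x0 y z)
      ⟨y0, Finset.mem_univ y0, ?_⟩
    refine Finset.sum_pos' (fun z _ => hterm x0 y0 z)
      ⟨z0, Finset.mem_univ z0, ?_⟩
    exact mul_pos (mul_pos (mul_pos hx0 hy0) hz0) (Real.exp_pos _)
  have hSeq : S = Real.exp ((α - 1) * P.renyi1 α) := by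
    have hT : S = ∑ x, ∑ y, ∑ z,
        (P.joint x y z) ^ α * (P.qXgY x y * P.qZgY y z * P.qY y) ^ (1 - α) := by
      rw [hS]
      exact Finset.sum_congr rfl fun x _ => Finset.sum_congr rfl fun y _ =>
        Finset.sum_congr rfl fun z _ => Statement7Aux.term_eq P hα x y z
    rw [Channel.renyi1, ← hT,
      show (α - 1) * (1 / (α - 1) * Real.log S) = Real.log S by field_simp,
      Real.exp_log hSpos]
  set c : ℝ := (n : ℝ) * (P.IXZgY + ε) with hc
  have hmain : P.jointPn n ((P.T1set n ε)ᶜ)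
      ≤ Real.exp ((n : ℝ) * (α - 1) * (P.renyi1 α - P.IXZgY - ε)) := by
    rw [Channel.jointPn]
    have hstep : ∀ (xs : Fin n → X) (ys : Fin n → Y) (zs : Fin n → Z),
        (∏ k, P.joint (xs k) (ys k) (zs k)) *
            (@ite ℝ ((xs, ys, zs) ∈ (P.T1set n ε)ᶜ)
              (Classical.propDecidable _) 1 0)
          ≤ Real.exp (-((α - 1) * c)) *
            ∏ k, (P.joint (xs k) (ys k) (zs k) *
              Real.exp ((α - 1) * P.iXZgY (xs k) (ys k) (zs k))) := by
      intro xs ys zs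
      have hPnn : 0 ≤ ∏ k, P.joint (xs k) (ys k) (zs k) :=
        Finset.prod_nonneg fun k _ => Statement7Aux.joint_nonneg P _ _ _
      have hprod : ∏ k, (P.joint (xs k) (ys k) (zs k) *
            Real.exp ((α - 1) * P.iXZgY (xs k) (ys k) (zs k)))
          = (∏ k, P.joint (xs k) (ys k) (zs k)) *
              Real.exp ((α - 1) * P.iXZgYn n xs ys zs) := by
        rw [Finset.prod_mul_distrib, ← Real.exp_sum]
        rw [Channel.iXZgYn, Finset.mul_sum]
      rw [hprod]
      by_cases hmem : (xs, ys, zs) ∈ (P.T1set n ε)ᶜ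
      · have hgt : c < P.iXZgYn n xs ys zs := by
          have : ¬ (P.iXZgYn n xs ys zs ≤ c) := hmem
          exact not_le.mp this
        have h1 : (1 : ℝ) ≤ Real.exp (-((α - 1) * c)) *
            Real.exp ((α - 1) * P.iXZgYn n xs ys zs) := by
          rw [← Real.exp_add]
          refine Real.one_le_exp ?_
          nlinarith
        rw [if_pos hmem]
        calc (∏ k, P.joint (xs k) (ys k) (zs k)) * 1
            = ∏ k, P.joint (xs k) (ys k) (zs k) := mul_one _
          _ ≤ (∏ k, P.joint (xs k) (ys k) (zs k)) *
                (Real.exp (-((α - 1) * c)) *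
                  Real.exp ((α - 1) * P.iXZgYn n xs ys zs)) :=
              le_mul_of_one_le_right hPnn h1
          _ = Real.exp (-((α - 1) * c)) *
                ((∏ k, P.joint (xs k) (ys k) (zs k)) *
                  Real.exp ((α - 1) * P.iXZgYn n xs ys zs)) := by ring
      · rw [if_neg hmem, mul_zero]
        exact mul_nonneg (Real.exp_pos _).le (mul_nonneg hPnn (Real.exp_pos _).le)
    refine le_trans (Finset.sum_le_sum fun xs _ => Finset.sum_le_sum fun ys _ =>
      Finset.sum_le_sum fun zs _ => hstep xs ys zs) (le_of_eq ?_)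
    calc ∑ xs : Fin n → X, ∑ ys : Fin n → Y, ∑ zs : Fin n → Z,
            Real.exp (-((α - 1) * c)) *
              ∏ k, (P.joint (xs k) (ys k) (zs k) *
                Real.exp ((α - 1) * P.iXZgY (xs k) (ys k) (zs k)))
        = Real.exp (-((α - 1) * c)) *
            ∑ xs : Fin n → X, ∑ ys : Fin n → Y, ∑ zs : Fin n → Z,
              ∏ k, (P.joint (xs k) (ys k) (zs k) *
                Real.exp ((α - 1) * P.iXZgY (xs k) (ys k) (zs k))) := by
          simp_rw [← Finset.mul_sum]
      _ = Real.exp (-((α - 1) * c)) * S ^ n := by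
          rw [Statement7Aux.triple_sum_prod
            (fun x y z => P.joint x y z * Real.exp ((α - 1) * P.iXZgY x y z)) n]
      _ = Real.exp ((n : ℝ) * (α - 1) * (P.renyi1 α - P.IXZgY - ε)) := by
          rw [hSeq, ← Real.exp_nat_mul, ← Real.exp_add, hc]
          congr 1
          ring
  refine ⟨hmain, fun β hβ hβ' => hmain.trans (Real.exp_le_exp.mpr ?_)⟩
  have hn : (0 : ℝ) ≤ (n : ℝ) := Nat.cast_nonneg n
  have h2 : (n : ℝ) * β ≤ (n : ℝ) * ((α - 1) * (P.IXZgY + ε - P.renyi1 α)) :=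
    mul_le_mul_of_nonneg_left hβ'.le hn
  have h3 : (n : ℝ) * (α - 1) * (P.renyi1 α - P.IXZgY - ε)
      = -((n : ℝ) * ((α - 1) * (P.IXZgY + ε - P.renyi1 α))) := by ring
  rw [h3]
  exact neg_le_neg h2


end MACResolvability
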